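/- arXiv:1804.04964 — 2 statements merged into one kernel-verified Lean document; each statement's English description precedes it below -/
import Mathlib

section
/- Fundamental Theorem for translationally invariant injective MPS: Let A and B be injective MPS tensors (matrices A^i, B^i ∈ Mat(D), respectively Mat(D')) generating the same translationally invariant state on n ≥ 3 sites: ∑ Tr(A^{i₁}⋯A^{i_n})|i₁…i_n⟩ = ∑ Tr(B^{i₁}⋯B^{i_n})|i₁…i_n⟩. Then D = D' and there exist an invertible matrix Z and a scalar λ with λⁿ = 1 such that B^i = λ Z⁻¹ A^i Z for all i; Z is unique up to a multiplicative constant. -/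
/-!
Injectivity makes the `A i`, and likewise the `B i`, span the full matrix algebra, and then so do
their products of any fixed positive length. Pairing with products of length `n - 1` shows that
the `A i` and the `B i` satisfy the same linear relations, so `A i ↦ B i` extends to a linear
isomorphism `Φ`; by multilinearity it preserves traces of all `n`-fold products. Pairing with
products of length `n - 2` then gives `Φ X * Φ Y = Φ (X * Y) * Φ 1`. Hence `Φ 1` is central,
i.e. `Φ 1 = μ • 1`, `μ ^ n = 1` by taking the trace of `Φ 1 ^ n`, and `μ⁻¹ • Φ` is an algebra
isomorphism, which is inner by Skolem–Noether. The conjugating matrix is unique up to a scalar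
because the centre of a matrix algebra consists of the scalars.
-/

open Matrix Pointwise

def wordProd {M ι : Type*} [Monoid M] (A : ι → M) {k : ℕ} (f : Fin k → ι) : M :=
  (List.ofFn fun j => A (f j)).prod

@[simp]
theorem wordProd_cons {M ι : Type*} [Monoid M] (A : ι → M) {k : ℕ} (i : ι) (f : Fin k → ι) :
    wordProd A (Fin.cons i f : Fin (k + 1) → ι) = A i * wordProd A f := by
  simp [wordProd, List.ofFn_succ]

theorem range_wordProd {M ι : Type*} [Monoid M] (A : ι → M) (k : ℕ) :
    Set.range (wordProd A : (Fin k → ι) → M) = Set.range A ^ k := by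
  ext N
  rw [Set.mem_pow]
  constructor
  · rintro ⟨f, rfl⟩
    exact ⟨fun j => ⟨A (f j), Set.mem_range_self _⟩, rfl⟩
  · rintro ⟨g, rfl⟩
    choose f hf using fun j => (g j).2
    exact ⟨f, by simp [wordProd, hf]⟩

theorem span_range_wordProd_eq_top {K R ι : Type*} [CommSemiring K] [Semiring R] [Algebra K R]
    {A : ι → R} (hA : Submodule.span K (Set.range A) = ⊤) {k : ℕ} (hk : k ≠ 0) :
    Submodule.span K (Set.range (wordProd A : (Fin k → ι) → R)) = ⊤ := by
  rw [range_wordProd, ← Submodule.span_pow, hA]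
  exact top_le_iff.1 (le_self_pow₀ le_top hk)

theorem LinearMap.exists_linearEquiv_comp_eq_of_ker_eq {R M N P : Type*} [Ring R]
    [AddCommGroup M] [AddCommGroup N] [AddCommGroup P] [Module R M] [Module R N] [Module R P]
    {f : M →ₗ[R] N} {g : M →ₗ[R] P} (hf : Function.Surjective f) (hg : Function.Surjective g)
    (h : ker f = ker g) : ∃ e : N ≃ₗ[R] P, ∀ x, e (f x) = g x :=
  ⟨(f.quotKerEquivOfSurjective hf).symm ≪≫ₗ Submodule.quotEquivOfEq _ _ h ≪≫ₗ
    g.quotKerEquivOfSurjective hg, fun x => by simp⟩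

theorem LinearMap.toMatrix'_toLinAlgEquiv' {R n : Type*} [CommSemiring R] [Fintype n]
    [DecidableEq n] (M : Matrix n n R) : LinearMap.toMatrix' (toLinAlgEquiv' M) = M :=
  LinearMap.toMatrix'_toLin' M

namespace Matrix

section CommSemiring

variable {K ι m m' : Type*} [CommSemiring K] [Fintype m] [DecidableEq m] [Fintype m']
  [DecidableEq m']

theorem eq_of_forall_trace_mul_eq {κ : Type*} {v : κ → Matrix m m K}
    (hv : Submodule.span K (Set.range v) = ⊤) {P Q : Matrix m m K}
    (h : ∀ j, (P * v j).trace = (Q * v j).trace) : P = Q := by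
  rw [ext_iff_trace_mul_right]
  exact LinearMap.congr_fun (LinearMap.ext_on_range hv h
    (f := traceLinearMap m K K ∘ₗ LinearMap.mulLeft K P)
    (g := traceLinearMap m K K ∘ₗ LinearMap.mulLeft K Q))

theorem trace_linearCombination_mul (A : ι → Matrix m m K) (c : ι →₀ K) (N : Matrix m m K) :
    (Finsupp.linearCombination K A c * N).trace =
      Finsupp.linearCombination K (fun i => (A i * N).trace) c :=
  Finsupp.apply_linearCombination K (traceLinearMap m K K ∘ₗ LinearMap.mulRight K N) A c

variable {A : ι → Matrix m m K} {B : ι → Matrix m' m' K}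

theorem ker_linearCombination_le_of_trace_wordProd_eq
    (hB : Submodule.span K (Set.range B) = ⊤) {k : ℕ} (hk : k ≠ 0)
    (hAB : ∀ f : Fin (k + 1) → ι, (wordProd A f).trace = (wordProd B f).trace) :
    LinearMap.ker (Finsupp.linearCombination K A) ≤
      LinearMap.ker (Finsupp.linearCombination K B) := by
  intro c hc
  rw [LinearMap.mem_ker] at hc ⊢
  refine eq_of_forall_trace_mul_eq (span_range_wordProd_eq_top hB hk) fun f => ?_
  have hletter : ∀ i, (B i * wordProd B f).trace = (A i * wordProd A f).trace := fun i => by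
    simpa using (hAB (Fin.cons i f)).symm
  rw [trace_linearCombination_mul, Matrix.zero_mul, trace_zero]
  simp_rw [hletter]
  rw [← trace_linearCombination_mul, hc, Matrix.zero_mul, trace_zero]

theorem trace_wordProd_map_eq {Φ : Matrix m m K →ₗ[K] Matrix m' m' K}
    (hA : Submodule.span K (Set.range A) = ⊤) (hΦ : ∀ i, Φ (A i) = B i) {n : ℕ}
    (hAB : ∀ f : Fin n → ι, (wordProd A f).trace = (wordProd B f).trace)
    (M : Fin n → Matrix m m K) : (wordProd Φ M).trace = (List.ofFn M).prod.trace := by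
  have := MultilinearMap.ext_of_span_eq_top (g := fun _ => A) (fun _ => hA)
    (φ := (traceLinearMap m' K K).compMultilinearMap
      ((MultilinearMap.mkPiAlgebraFin K n _).compLinearMap fun _ => Φ))
    (φ' := (traceLinearMap m K K).compMultilinearMap (MultilinearMap.mkPiAlgebraFin K n _))
    fun f => by
      simp only [LinearMap.compMultilinearMap_apply, MultilinearMap.compLinearMap_apply,
        MultilinearMap.mkPiAlgebraFin_apply, traceLinearMap_apply, hΦ]
      exact (hAB f).symm
  simpa [wordProd] using DFunLike.congr_fun this M

theorem map_mul_mul_map_one {Φ : Matrix m m K →ₗ[K] Matrix m' m' K}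
    (hB : Submodule.span K (Set.range B) = ⊤) (hΦ : ∀ i, Φ (A i) = B i) {k : ℕ} (hk : k ≠ 0)
    (htr : ∀ M : Fin (k + 2) → Matrix m m K, (wordProd Φ M).trace = (List.ofFn M).prod.trace)
    (X Y : Matrix m m K) : Φ X * Φ Y = Φ (X * Y) * Φ 1 := by
  refine eq_of_forall_trace_mul_eq (span_range_wordProd_eq_top hB hk) fun f => ?_
  have h1 := htr (Fin.cons X (Fin.cons Y (A ∘ f)))
  have h2 := htr (Fin.cons (X * Y) (Fin.cons 1 (A ∘ f)))
  simp only [wordProd, List.ofFn_succ, Fin.cons_zero, Fin.cons_succ, Function.comp_apply, hΦ,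
    List.prod_cons, one_mul] at h1 h2
  rw [Matrix.mul_assoc, Matrix.mul_assoc]
  calc (Φ X * (Φ Y * wordProd B f)).trace = (X * (Y * wordProd A f)).trace := h1
    _ = (X * Y * wordProd A f).trace := by rw [Matrix.mul_assoc]
    _ = (Φ (X * Y) * (Φ 1 * wordProd B f)).trace := h2.symm

theorem exists_map_one_eq_smul_one {Φ : Matrix m m K →ₗ[K] Matrix m' m' K}
    (hΦ : Function.Surjective Φ) (hmul : ∀ X Y, Φ X * Φ Y = Φ (X * Y) * Φ 1) :
    ∃ μ : K, Φ 1 = μ • 1 := by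
  obtain ⟨μ, hμ⟩ := mem_range_scalar_iff_commute_single'.2 fun i j => by
    obtain ⟨X, hX⟩ := hΦ (single i j 1)
    rw [← hX]
    show Φ X * Φ 1 = Φ 1 * Φ X
    simpa using (hmul 1 X).symm
  exact ⟨μ, by rw [← hμ, scalar_apply, smul_one_eq_diagonal]⟩

end CommSemiring

section CommRing

variable {K ι m m' : Type*} [CommRing K] [Fintype m] [DecidableEq m] [Fintype m']
  [DecidableEq m']
  {A : ι → Matrix m m K} {B : ι → Matrix m' m' K}

theorem exists_linearEquiv_apply_eq_of_trace_wordProd_eq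
    (hA : Submodule.span K (Set.range A) = ⊤) (hB : Submodule.span K (Set.range B) = ⊤)
    {k : ℕ} (hk : k ≠ 0)
    (hAB : ∀ f : Fin (k + 1) → ι, (wordProd A f).trace = (wordProd B f).trace) :
    ∃ e : Matrix m m K ≃ₗ[K] Matrix m' m' K, ∀ i, e (A i) = B i := by
  obtain ⟨e, he⟩ := LinearMap.exists_linearEquiv_comp_eq_of_ker_eq
    (f := Finsupp.linearCombination K A) (g := Finsupp.linearCombination K B)
    (LinearMap.range_eq_top.1 <| by rwa [Finsupp.range_linearCombination])
    (LinearMap.range_eq_top.1 <| by rwa [Finsupp.range_linearCombination])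
    (le_antisymm (ker_linearCombination_le_of_trace_wordProd_eq hB hk hAB)
      (ker_linearCombination_le_of_trace_wordProd_eq hA hk fun f => (hAB f).symm))
  exact ⟨e, fun i => by simpa using he (Finsupp.single i 1)⟩

end CommRing

section Field

variable {K ι m m' : Type*} [Field K] [Fintype m] [DecidableEq m] [Fintype m'] [DecidableEq m']

theorem span_range_eq_top_of_injective_trace {A : ι → Matrix m m K}
    (hA : Function.Injective fun X : Matrix m m K => fun i => (A i * Xᵀ).trace) :
    Submodule.span K (Set.range A) = ⊤ := by
  by_contra h
  obtain ⟨f, hf0, hf⟩ := Submodule.exists_dual_map_eq_bot_of_lt_top (lt_top_iff_ne_top.2 h)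
    inferInstance
  set X : Matrix m m K := Matrix.of fun a b => f (single a b 1)
  have hfX : ∀ M, f M = (M * Xᵀ).trace := by
    refine LinearMap.congr_fun (Matrix.ext_linearMap K (f := f)
      (g := traceLinearMap m K K ∘ₗ LinearMap.mulRight K Xᵀ) fun a b => LinearMap.ext_ring ?_)
    simp [trace_single_mul, X]
  have hX : X = 0 := hA <| funext fun i => by
    have := Submodule.mem_map_of_mem (f := f)
      (Submodule.subset_span (Set.mem_range_self (f := A) i))
    simpa [← hfX, hf] using this
  exact hf0 (LinearMap.ext fun M => by simp [hfX, hX])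

theorem pow_eq_one_of_trace_wordProd_map_eq [CharZero K] [Nonempty m]
    {Φ : Matrix m m K →ₗ[K] Matrix m m K} {μ : K} (hμ : Φ 1 = μ • 1) {n : ℕ}
    (htr : ∀ M : Fin n → Matrix m m K, (wordProd Φ M).trace = (List.ofFn M).prod.trace) :
    μ ^ n = 1 := by
  simpa [wordProd, hμ, List.ofFn_const, List.prod_replicate, smul_pow] using htr fun _ => 1

theorem _root_.AlgEquiv.exists_matrix_conj (Ψ : Matrix m m K ≃ₐ[K] Matrix m' m' K) :
    ∃ (Z : Matrix m m' K) (W : Matrix m' m K), Z * W = 1 ∧ W * Z = 1 ∧ ∀ X, Ψ X = W * X * Z := by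
  obtain ⟨T, hT⟩ := (toLinAlgEquiv'.symm.trans (Ψ.trans toLinAlgEquiv')).eq_linearEquivConjAlgEquiv
  refine ⟨LinearMap.toMatrix' T.symm.toLinearMap, LinearMap.toMatrix' T.toLinearMap, ?_, ?_,
    fun X => ?_⟩
  · rw [← LinearMap.toMatrix'_comp]; simp
  · rw [← LinearMap.toMatrix'_comp]; simp
  · have := congr(LinearMap.toMatrix' ($hT (toLinAlgEquiv' X)))
    simpa only [AlgEquiv.trans_apply, AlgEquiv.symm_apply_apply, LinearEquiv.conjAlgEquiv_apply,
      LinearMap.toMatrix'_comp, LinearMap.toMatrix'_toLinAlgEquiv', Matrix.mul_assoc] using this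

theorem exists_conj_of_map_mul_mul_map_one (Φ : Matrix m m K ≃ₗ[K] Matrix m' m' K)
    {μ : K} (hμ0 : μ ≠ 0) (hμ : Φ 1 = μ • 1) (hmul : ∀ X Y, Φ X * Φ Y = Φ (X * Y) * Φ 1) :
    ∃ (Z : Matrix m m' K) (W : Matrix m' m K), Z * W = 1 ∧ W * Z = 1 ∧
      ∀ X, Φ X = μ • (W * X * Z) := by
  let Ψ : Matrix m m K ≃ₐ[K] Matrix m' m' K :=
    .ofLinearEquiv (Φ ≪≫ₗ .smulOfNeZero K _ μ⁻¹ (inv_ne_zero hμ0))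
      (by simp [hμ, hμ0]) fun X Y => by simp [hmul, hμ, smul_smul, inv_mul_cancel₀ hμ0]
  obtain ⟨Z, W, hZW, hWZ, hΨ⟩ := Ψ.exists_matrix_conj
  refine ⟨Z, W, hZW, hWZ, fun X => ?_⟩
  rw [← hΨ X]
  simp [Ψ, hμ0]

theorem exists_eq_smul_of_smul_conj_eq [Nonempty m] {Z Z' : Matrix m m' K}
    {W W' : Matrix m' m K} {μ μ' : K} (hμ : μ ≠ 0) (hZW : Z * W = 1) (hWZ : W * Z = 1)
    (hZW' : Z' * W' = 1) (h : ∀ X : Matrix m m K, μ' • (W' * X * Z') = μ • (W * X * Z)) :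
    ∃ c : K, c ≠ 0 ∧ Z' = c • Z := by
  set C := Z' * W
  have hcomm : ∀ X, μ' • (X * C) = μ • (C * X) := fun X => calc
    μ' • (X * C) = Z' * (μ' • (W' * X * Z')) * W := by
      simp only [C, Matrix.mul_smul, Matrix.smul_mul, ← Matrix.mul_assoc, hZW', Matrix.one_mul]
    _ = Z' * (μ • (W * X * Z)) * W := by rw [h]
    _ = μ • (C * X) := by
      simp only [C, Matrix.mul_smul, Matrix.smul_mul, Matrix.mul_assoc, hZW, Matrix.mul_one]
  have hCinv : C * (Z * W') = 1 := by
    rw [Matrix.mul_assoc, ← Matrix.mul_assoc W, hWZ, Matrix.one_mul, hZW']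
  obtain rfl : μ' = μ := by
    have := congr($(hcomm 1) * (Z * W'))
    simp only [Matrix.one_mul, Matrix.mul_one, Matrix.smul_mul, hCinv] at this
    exact smul_left_injective K one_ne_zero this
  obtain ⟨c, hc⟩ := mem_range_scalar_iff_commute_single'.2 fun i j =>
    smul_right_injective _ hμ (hcomm (single i j 1))
  refine ⟨c, ?_, ?_⟩
  · rintro rfl
    simp [← hc] at hCinv
  · calc Z' = C * Z := by rw [Matrix.mul_assoc, hWZ, Matrix.mul_one]
      _ = c • Z := by rw [← hc, scalar_apply, ← smul_eq_diagonal_mul]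

end Field

theorem forall_smul_conj_eq_of_span_eq_top {K ι m m' : Type*} [CommSemiring K] [Fintype m]
    {A : ι → Matrix m m K} (hA : Submodule.span K (Set.range A) = ⊤)
    {Z Z' : Matrix m m' K} {W W' : Matrix m' m K} {μ μ' : K}
    (h : ∀ i, μ' • (W' * A i * Z') = μ • (W * A i * Z)) (X : Matrix m m K) :
    μ' • (W' * X * Z') = μ • (W * X * Z) := by
  have hX : X ∈ Submodule.span K (Set.range A) := hA ▸ Submodule.mem_top
  induction hX using Submodule.span_induction with
  | mem _ hX => obtain ⟨i, rfl⟩ := hX; exact h i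
  | zero => simp
  | add X Y _ _ hX hY => simp [Matrix.mul_add, Matrix.add_mul, hX, hY]
  | smul c X _ hX => simp only [Matrix.mul_smul, Matrix.smul_mul, smul_comm _ c, hX]

end Matrix

/-- Fundamental theorem for translationally invariant injective MPS on
`n ≥ 3` sites. -/
theorem fundamental_theorem_TI_injective_MPS (n d D D' : ℕ) (hn : 3 ≤ n)
    (A : Fin d → Matrix (Fin D) (Fin D) ℂ) (B : Fin d → Matrix (Fin D') (Fin D') ℂ)
    (hA : Function.Injective fun X : Matrix (Fin D) (Fin D) ℂ =>
      fun i : Fin d => (A i * Xᵀ).trace)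
    (hB : Function.Injective fun X : Matrix (Fin D') (Fin D') ℂ =>
      fun i : Fin d => (B i * Xᵀ).trace)
    (hstate : ∀ i : Fin n → Fin d,
      ((List.ofFn fun k => A (i k)).prod).trace = ((List.ofFn fun k => B (i k)).prod).trace) :
    D = D' ∧
    ∃ (Z : Matrix (Fin D) (Fin D') ℂ) (W : Matrix (Fin D') (Fin D) ℂ) (lam : ℂ),
      Z * W = 1 ∧ W * Z = 1 ∧ lam ^ n = 1 ∧
      (∀ i, B i = lam • (W * A i * Z)) ∧
      ∀ (Z' : Matrix (Fin D) (Fin D') ℂ) (W' : Matrix (Fin D') (Fin D) ℂ) (lam' : ℂ),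
        Z' * W' = 1 → W' * Z' = 1 → lam' ^ n = 1 →
        (∀ i, B i = lam' • (W' * A i * Z')) →
        ∃ c : ℂ, c ≠ 0 ∧ Z' = c • Z := by
  obtain ⟨k, rfl⟩ : ∃ k, n = k + 3 := ⟨n - 3, by omega⟩
  have hAspan := span_range_eq_top_of_injective_trace hA
  have hBspan := span_range_eq_top_of_injective_trace hB
  obtain ⟨Φ, hΦ⟩ :=
    exists_linearEquiv_apply_eq_of_trace_wordProd_eq (k := k + 2) hAspan hBspan (by omega) hstate
  obtain rfl : D = D' := Nat.mul_self_inj.1 (by simpa [Module.finrank_matrix] using Φ.finrank_eq)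
  refine ⟨rfl, ?_⟩
  rcases isEmpty_or_nonempty (Fin D) with _ | _
  · exact ⟨1, 1, 1, Subsingleton.elim _ _, Subsingleton.elim _ _, one_pow _,
      fun _ => Subsingleton.elim _ _, fun _ _ _ _ _ _ _ => ⟨1, one_ne_zero, Subsingleton.elim _ _⟩⟩
  have htr := trace_wordProd_map_eq (Φ := Φ.toLinearMap) hAspan hΦ hstate
  have hmul := map_mul_mul_map_one (k := k + 1) hBspan hΦ (by omega) htr
  obtain ⟨μ, hμ⟩ := exists_map_one_eq_smul_one Φ.surjective hmul
  have hμn : μ ^ (k + 3) = 1 := pow_eq_one_of_trace_wordProd_map_eq hμ htr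
  have hμ0 : μ ≠ 0 := by rintro rfl; simp at hμn
  obtain ⟨Z, W, hZW, hWZ, hconj⟩ := exists_conj_of_map_mul_mul_map_one Φ hμ0 hμ hmul
  refine ⟨Z, W, μ, hZW, hWZ, hμn, fun i => by rw [← hΦ i, hconj], ?_⟩
  intro Z' W' lam' hZW' _ _ hB'
  exact exists_eq_smul_of_smul_conj_eq hμ0 hZW hWZ hZW'
    (forall_smul_conj_eq_of_span_eq_top hAspan fun i => by rw [← hB' i, ← hΦ i, hconj])
end

section
/- Normal MPS improved bound (translationally invariant case, 2L+1 sites): Let A and B be MPS tensors such that blocking L consecutive sites yields an injective tensor, and suppose they generate the same state on n ≥ 2L+1 sites. Then the bond dimensions agree and there exist an invertible matrix Z and a scalar λ with λⁿ = 1 such that B^i = λ Z⁻¹ A^i Z for all i; Z is unique up to a multiplicative constant. -/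
/-!
Blocking `L` sites is injective for `A` and for `B`, so for every `m ≥ L` the products of `m`
letters span all matrices, and the trace pairing with products of `k ≥ L` letters is injective.
Equality of the two states on `n = m + k` sites then says exactly that `A_w ↦ B_w` (`|w| = m`)
extends to a linear isomorphism `ψ_m`; in particular `D = D'`. As `n ≥ 2L + 1`, this applies to
the overlapping windows `m = L` and `m = L + 1`, and comparing them gives
`ψ_{L+1}(A_i X) = B_i ψ_L(X)` and `ψ_{L+1}(X A_i) = ψ_L(X) B_i`. Hence `Δ = ψ_L⁻¹ ψ_{L+1}`
satisfies `A_u Δ(X A_v) = Δ(A_u X) A_v` for words of equal length; since these span,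
`M Δ(X N) = Δ(M X) N` for all matrices, so `Δ` is a scalar `μ`. This makes `μ^{-L} ψ_L` an
algebra automorphism of the full matrix algebra, hence inner (Skolem–Noether), and
`B_i = μ Z⁻¹ A_i Z`. Comparing traces and conjugations on words of length `n` gives `μ^n = 1` and
the uniqueness of `Z` up to a scalar.
-/

open Matrix Submodule

namespace Matrix

variable {K n : Type*} [Field K] [Fintype n] [DecidableEq n]

theorem exists_eq_trace_mul (f : Matrix n n K →ₗ[K] K) :
    ∃ X : Matrix n n K, ∀ M, f M = (M * X).trace := by
  refine ⟨of fun i j => f (single j i 1), fun M => ?_⟩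
  show f M = (traceLinearMap n K K ∘ₗ LinearMap.mulRight K _) M
  congr 1
  refine (stdBasis K n n).ext fun ⟨i, j⟩ => ?_
  simp [stdBasis_eq_single, trace_single_mul]

theorem span_eq_top_iff_trace_mul_eq_zero {S : Set (Matrix n n K)} :
    span K S = ⊤ ↔ ∀ X, (∀ M ∈ S, (M * X).trace = 0) → X = 0 := by
  constructor
  · intro hS X hX
    have h : traceLinearMap n K K ∘ₗ LinearMap.mulRight K X = 0 :=
      LinearMap.ext_on hS fun M hM => by simpa using hX M hM
    exact ext_iff_trace_mul_left.mpr fun M => by simpa using LinearMap.congr_fun h M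
  · intro hS
    by_contra hne
    obtain ⟨f, hf, hle⟩ := (span K S).exists_le_ker_of_lt_top (lt_top_iff_ne_top.mpr hne)
    obtain ⟨X, hX⟩ := exists_eq_trace_mul f
    refine hf (LinearMap.ext fun M => ?_)
    rw [hX, hS X fun M hM => by rw [← hX]; exact hle (subset_span hM)]
    simp

theorem exists_eq_smul_one_of_forall_commute {M : Matrix n n K} (h : ∀ X, Commute X M) :
    ∃ c : K, M = c • 1 := by
  obtain ⟨c, hc⟩ := mem_range_scalar_of_commute_single fun i j _ => h (single i j 1)
  exact ⟨c, by rw [← hc, scalar_apply, smul_one_eq_diagonal]⟩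

theorem isUnit_of_forall_exists_mul_eq {T : Matrix n n K} (hT : T ≠ 0)
    (h : ∀ X, ∃ Y, T * X = Y * T) : IsUnit T := by
  refine mulVec_injective_iff_isUnit.mp fun u v huv => ?_
  by_contra hne
  obtain ⟨b, hb⟩ : ∃ b, (u - v) b ≠ 0 := Function.ne_iff.mp (sub_ne_zero.mpr hne)
  refine hT (ext fun i c => ?_)
  obtain ⟨Y, hY⟩ := h (single c b 1)
  have h0 : T *ᵥ (single c b 1 *ᵥ (u - v)) = 0 := by
    rw [mulVec_mulVec, hY, ← mulVec_mulVec, mulVec_sub, huv, sub_self, mulVec_zero]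
  have := congrFun h0 i
  rw [single_mulVec, one_mul, ← Pi.single, mulVec_single] at this
  exact (mul_eq_zero.mp this).resolve_right hb

theorem exists_ne_zero_apply_mul_eq (χ : Matrix n n K →ₐ[K] Matrix n n K)
    (hχ : Function.Injective χ) [Nonempty n] :
    ∃ T : Matrix n n K, T ≠ 0 ∧ ∀ X, χ X * T = T * X := by
  let i₀ : n := Classical.arbitrary n
  obtain ⟨r, j₀, hrj⟩ : ∃ r j, χ (single i₀ i₀ 1) r j ≠ 0 := by
    by_contra! h
    have : single i₀ i₀ (1 : K) = 0 := hχ (by rw [map_zero]; exact ext h)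
    simpa using congr_fun (congr_fun this i₀) i₀
  -- Column `c` of `T` is `χ (single c i₀ 1) v`, where `v` is column `j₀` of `χ (single i₀ i₀ 1)`:
  -- the isomorphism between the simple module `n → K` and its twist by `χ`.
  let T := ∑ c, χ (single c i₀ 1) * single j₀ c 1
  have hTE : ∀ a b, T * single a b 1 = χ (single a i₀ 1) * single j₀ b 1 := by
    intro a b
    rw [Finset.sum_mul, Finset.sum_eq_single a]
    · rw [mul_assoc, single_mul_single_same, one_mul]
    · intro c _ hc
      rw [mul_assoc, single_mul_single_of_ne (h := hc), mul_zero]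
    · simp
  have hET : ∀ a b, χ (single a b 1) * T = χ (single a i₀ 1) * single j₀ b 1 := by
    intro a b
    rw [Finset.mul_sum, Finset.sum_eq_single b]
    · rw [← mul_assoc, ← map_mul, single_mul_single_same, one_mul]
    · intro c _ hc
      rw [← mul_assoc, ← map_mul, single_mul_single_of_ne (h := Ne.symm hc), map_zero,
        zero_mul]
    · simp
  refine ⟨T, fun h0 => hrj ?_, fun X => ?_⟩
  · have := congr_fun (congr_fun (hTE i₀ i₀) r) i₀
    rw [h0, zero_mul, mul_single_apply_same, mul_one] at this
    exact this.symm
  · have h : LinearMap.mulRight K T ∘ₗ χ.toLinearMap = LinearMap.mulLeft K T :=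
      (stdBasis K n n).ext fun ⟨a, b⟩ => by simp [stdBasis_eq_single, hTE, hET]
    exact LinearMap.congr_fun h X

theorem exists_conj_of_algHom (χ : Matrix n n K →ₐ[K] Matrix n n K)
    (hχ : Function.Injective χ) :
    ∃ Z W : Matrix n n K, Z * W = 1 ∧ W * Z = 1 ∧ ∀ X, χ X = W * X * Z := by
  cases isEmpty_or_nonempty n
  · exact ⟨1, 1, mul_one 1, mul_one 1, fun _ => Subsingleton.elim _ _⟩
  obtain ⟨T, hT, hχT⟩ := exists_ne_zero_apply_mul_eq χ hχ
  have hU : IsUnit T := isUnit_of_forall_exists_mul_eq hT fun X => ⟨χ X, (hχT X).symm⟩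
  refine ⟨↑hU.unit⁻¹, hU.unit, hU.unit.inv_mul, hU.unit.mul_inv, fun X => ?_⟩
  rw [IsUnit.unit_spec, ← hχT, mul_assoc, IsUnit.mul_val_inv, mul_one]

end Matrix

namespace MatrixProductState

variable {K ι n n' : Type*} [Field K] [Fintype n] [DecidableEq n] [Fintype n']

def wordProds {R : Type*} [Monoid R] (A : ι → R) (m : ℕ) : Set R :=
  (fun w : List ι => (w.map A).prod) '' {w | w.length = m}

theorem span_wordProds_eq_top_of_injective {A : ι → Matrix n n K} {L : ℕ}
    (hA : Function.Injective fun X : Matrix n n K =>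
      fun i : Fin L → ι => ((List.ofFn fun k => A (i k)).prod * Xᵀ).trace) :
    span K (wordProds A L) = ⊤ := by
  refine span_eq_top_iff_trace_mul_eq_zero.mpr fun X hX =>
    transpose_eq_zero.mp (hA (funext fun i => ?_))
  simpa [List.map_ofFn, Function.comp_def] using hX _ ⟨List.ofFn i, List.length_ofFn, rfl⟩

theorem span_wordProds_succ_eq_top {A : ι → Matrix n n K} {m : ℕ} (hm : m ≠ 0)
    (hA : span K (wordProds A m) = ⊤) : span K (wordProds A (m + 1)) = ⊤ := by
  set P := span K (wordProds A (m + 1))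
  have hmul_letter : ∀ i M, M * A i ∈ P := by
    intro i M
    have : (span K (wordProds A m)).map (LinearMap.mulRight K (A i)) ≤ P := by
      rw [map_span_le]
      rintro _ ⟨w, hw, rfl⟩
      exact subset_span ⟨w ++ [i], by simpa using hw, by simp⟩
    exact this ⟨M, by simp [hA], rfl⟩
  have hmul_word : ∀ M, (span K (wordProds A m)).map (LinearMap.mulLeft K M) ≤ P := by
    intro M
    rw [map_span_le]
    rintro _ ⟨w, hw, rfl⟩
    obtain ⟨u, i, rfl⟩ :=
      (List.eq_nil_or_concat w).resolve_left (by rintro rfl; exact hm hw.symm)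
    simpa [← mul_assoc] using hmul_letter i (M * (u.map A).prod)
  exact eq_top_iff.mpr fun M _ => by simpa using hmul_word M ⟨1, by simp [hA], rfl⟩

theorem span_wordProds_eq_top_of_le {A : ι → Matrix n n K} {L m : ℕ} (hL : L ≠ 0)
    (hA : span K (wordProds A L) = ⊤) (hm : L ≤ m) : span K (wordProds A m) = ⊤ := by
  induction m, hm using Nat.le_induction with
  | base => exact hA
  | succ m hLm ih => exact span_wordProds_succ_eq_top (by omega) ih

def wordTraces (A : ι → Matrix n n K) (k : ℕ) :
    Matrix n n K →ₗ[K] ({v : List ι // v.length = k} → K) :=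
  LinearMap.pi fun v => traceLinearMap n K K ∘ₗ LinearMap.mulLeft K (v.1.map A).prod

theorem wordTraces_injective {A : ι → Matrix n n K} {k : ℕ}
    (hA : span K (wordProds A k) = ⊤) : Function.Injective (wordTraces A k) := by
  refine (injective_iff_map_eq_zero _).mpr fun X hX =>
    span_eq_top_iff_trace_mul_eq_zero.mp hA X ?_
  rintro _ ⟨v, hv, rfl⟩
  simpa [wordTraces] using congr_fun hX ⟨v, hv⟩

theorem exists_linearEquiv_of_trace_eq [DecidableEq n'] {A : ι → Matrix n n K}
    {B : ι → Matrix n' n' K} {m k : ℕ}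
    (hAm : span K (wordProds A m) = ⊤) (hBm : span K (wordProds B m) = ⊤)
    (hAk : span K (wordProds A k) = ⊤) (hBk : span K (wordProds B k) = ⊤)
    (hstate : ∀ w : List ι, w.length = k + m →
      ((w.map A).prod).trace = ((w.map B).prod).trace) :
    ∃ ψ : Matrix n n K ≃ₗ[K] Matrix n' n' K,
      ∀ w : List ι, w.length = m → ψ (w.map A).prod = (w.map B).prod := by
  have hTA := wordTraces_injective hAk
  have hTB := wordTraces_injective hBk
  have hword : ∀ w : List ι, w.length = m →
      wordTraces A k (w.map A).prod = wordTraces B k (w.map B).prod := fun w hw =>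
    funext fun v => by simpa [wordTraces] using hstate (v.1 ++ w) (by simp [v.2, hw])
  have hrange : LinearMap.range (wordTraces A k) = LinearMap.range (wordTraces B k) := by
    rw [LinearMap.range_eq_map, LinearMap.range_eq_map, ← hAm, ← hBm, map_span, map_span,
      wordProds, wordProds, Set.image_image, Set.image_image]
    exact congrArg _ (Set.image_congr hword)
  refine ⟨(LinearEquiv.ofInjective _ hTA).trans
    ((LinearEquiv.ofEq _ _ hrange).trans (LinearEquiv.ofInjective _ hTB).symm), fun w hw => hTB ?_⟩
  simp [hword w hw]

theorem apply_mul_eq_mul_apply [DecidableEq n'] {A : ι → Matrix n n K} {B : ι → Matrix n' n' K}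
    {m : ℕ}
    (hA : span K (wordProds A m) = ⊤) (ψ φ : Matrix n n K →ₗ[K] Matrix n' n' K)
    (hψ : ∀ w : List ι, w.length = m → ψ (w.map A).prod = (w.map B).prod)
    (hφ : ∀ w : List ι, w.length = m + 1 → φ (w.map A).prod = (w.map B).prod)
    (i : ι) (X : Matrix n n K) : φ (A i * X) = B i * ψ X := by
  have h : φ ∘ₗ LinearMap.mulLeft K (A i) = LinearMap.mulLeft K (B i) ∘ₗ ψ := by
    refine LinearMap.ext_on hA ?_
    rintro _ ⟨w, hw, rfl⟩
    simpa [hψ w hw] using hφ (i :: w) (by simpa using hw)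
  exact LinearMap.congr_fun h X

theorem apply_mul_eq_apply_mul [DecidableEq n'] {A : ι → Matrix n n K} {B : ι → Matrix n' n' K}
    {m : ℕ}
    (hA : span K (wordProds A m) = ⊤) (ψ φ : Matrix n n K →ₗ[K] Matrix n' n' K)
    (hψ : ∀ w : List ι, w.length = m → ψ (w.map A).prod = (w.map B).prod)
    (hφ : ∀ w : List ι, w.length = m + 1 → φ (w.map A).prod = (w.map B).prod)
    (i : ι) (X : Matrix n n K) : φ (X * A i) = ψ X * B i := by
  have h : φ ∘ₗ LinearMap.mulRight K (A i) = LinearMap.mulRight K (B i) ∘ₗ ψ := by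
    refine LinearMap.ext_on hA ?_
    rintro _ ⟨w, hw, rfl⟩
    simpa [hψ w hw] using hφ (w ++ [i]) (by simpa using hw)
  exact LinearMap.congr_fun h X

theorem exists_eq_smul_of_forall_mul_apply_mul (Δ : Matrix n n K →ₗ[K] Matrix n n K)
    (h : ∀ M N X, M * Δ (X * N) = Δ (M * X) * N) : ∃ μ : K, ∀ X, Δ X = μ • X := by
  have hleft : ∀ X, X * Δ 1 = Δ X := fun X => by simpa using h X 1 1
  have hright : ∀ X, Δ X = Δ 1 * X := fun X => by simpa using h 1 X 1
  obtain ⟨μ, hμ⟩ := exists_eq_smul_one_of_forall_commute fun X => (hleft X).trans (hright X)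
  exact ⟨μ, fun X => by rw [← hleft, hμ, mul_smul_comm, mul_one]⟩

theorem prod_mul_apply_mul_prod {A : ι → Matrix n n K} (Δ : Matrix n n K →ₗ[K] Matrix n n K)
    (h : ∀ i j X, A i * Δ (X * A j) = Δ (A i * X) * A j) :
    ∀ u v : List ι, u.length = v.length → ∀ X,
      (u.map A).prod * Δ (X * (v.map A).prod) = Δ ((u.map A).prod * X) * (v.map A).prod := by
  intro u
  induction u with
  | nil => rintro (_ | _) huv X <;> simp_all
  | cons i u ih =>
    rintro (_ | ⟨j, v⟩) huv X
    · simp at huv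
    calc A i * (u.map A).prod * Δ (X * (A j * (v.map A).prod))
        = A i * ((u.map A).prod * Δ ((X * A j) * (v.map A).prod)) := by simp only [mul_assoc]
      _ = A i * Δ ((u.map A).prod * X * A j) * (v.map A).prod := by
          rw [ih v (by simpa using huv)]; simp only [mul_assoc]
      _ = Δ (A i * (u.map A).prod * X) * (A j * (v.map A).prod) := by
          rw [h]; simp only [mul_assoc]

theorem exists_eq_smul_of_mul_apply_mul {A : ι → Matrix n n K} {L : ℕ}
    (hA : span K (wordProds A L) = ⊤) (Δ : Matrix n n K →ₗ[K] Matrix n n K)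
    (h : ∀ i j X, A i * Δ (X * A j) = Δ (A i * X) * A j) : ∃ μ : K, ∀ X, Δ X = μ • X := by
  refine exists_eq_smul_of_forall_mul_apply_mul Δ fun M N X => ?_
  have hM : ∀ v : List ι, v.length = L → ∀ M,
      M * Δ (X * (v.map A).prod) = Δ (M * X) * (v.map A).prod := by
    intro v hv
    refine LinearMap.congr_fun (LinearMap.ext_on hA (f := LinearMap.mulRight K _)
      (g := LinearMap.mulRight K _ ∘ₗ Δ ∘ₗ LinearMap.mulRight K X) ?_)
    rintro _ ⟨u, hu, rfl⟩
    exact prod_mul_apply_mul_prod Δ h u v (hu.trans hv.symm) X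
  refine LinearMap.congr_fun (LinearMap.ext_on hA
    (f := LinearMap.mulLeft K M ∘ₗ Δ ∘ₗ LinearMap.mulLeft K X)
    (g := LinearMap.mulLeft K (Δ (M * X))) ?_) N
  rintro _ ⟨v, hv, rfl⟩
  exact hM v hv M

theorem exists_eq_smul_of_exchange {A : ι → Matrix n n K} {B : ι → Matrix n' n' K} {L : ℕ}
    (hA : span K (wordProds A L) = ⊤) (ψ : Matrix n n K ≃ₗ[K] Matrix n' n' K)
    (φ : Matrix n n K →ₗ[K] Matrix n' n' K) (hφ : Function.Injective φ)
    (hleft : ∀ i X, φ (A i * X) = B i * ψ X) (hright : ∀ i X, φ (X * A i) = ψ X * B i) :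
    ∃ μ : K, ∀ X, φ X = μ • ψ X := by
  set Δ := ψ.symm.toLinearMap ∘ₗ φ
  have hψΔ : ∀ X, ψ (Δ X) = φ X := fun X => ψ.apply_symm_apply (φ X)
  obtain ⟨μ, hμ⟩ := exists_eq_smul_of_mul_apply_mul hA Δ fun i j X => hφ <| by
    rw [hleft, hψΔ, hright, hright, hψΔ, hleft, mul_assoc]
  exact ⟨μ, fun X => by rw [← hψΔ, hμ, map_smul]⟩

theorem mul_prod_eq_pow_smul [DecidableEq n'] {A : ι → Matrix n n K} {B : ι → Matrix n' n' K}
    (ψ : Matrix n n K →ₗ[K] Matrix n' n' K) {μ : K} (h : ∀ i X, ψ X * B i = μ • ψ (X * A i))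
    (w : List ι) (X : Matrix n n K) :
    ψ X * (w.map B).prod = μ ^ w.length • ψ (X * (w.map A).prod) := by
  induction w generalizing X with
  | nil => simp
  | cons i w ih =>
    simp only [List.map_cons, List.prod_cons, List.length_cons, ← mul_assoc, h, smul_mul_assoc,
      ih, smul_smul, pow_succ']

theorem prod_eq_pow_smul_conj {A B : ι → Matrix n n K} {Z W : Matrix n n K} {μ : K}
    (hZW : Z * W = 1) (hWZ : W * Z = 1) (h : ∀ i, B i = μ • (W * A i * Z)) (w : List ι) :
    (w.map B).prod = μ ^ w.length • (W * (w.map A).prod * Z) := by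
  induction w with
  | nil => simp [hWZ]
  | cons i w ih =>
    rw [List.map_cons, List.prod_cons, ih, h, smul_mul_smul, List.length_cons, pow_succ',
      List.map_cons, List.prod_cons]
    congr 1
    simp only [mul_assoc, ← mul_assoc Z W, hZW, one_mul]

theorem exists_conj_of_exchange {A B : ι → Matrix n n K} {L : ℕ} [Nonempty n]
    (hA : span K (wordProds A L) = ⊤) (hB : span K (wordProds B L) = ⊤)
    (ψ : Matrix n n K →ₗ[K] Matrix n n K) (hψinj : Function.Injective ψ)
    (hψ : ∀ w : List ι, w.length = L → ψ (w.map A).prod = (w.map B).prod) {μ : K}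
    (h : ∀ i X, ψ X * B i = μ • ψ (X * A i)) :
    ∃ Z W : Matrix n n K, Z * W = 1 ∧ W * Z = 1 ∧ ∀ i, B i = μ • (W * A i * Z) := by
  have hψ1 : ψ 1 = μ ^ L • 1 := by
    have h : LinearMap.mulLeft K (ψ 1) = μ ^ L • LinearMap.id := by
      refine LinearMap.ext_on hB ?_
      rintro _ ⟨w, hw, rfl⟩
      simpa [hψ w hw, show w.length = L from hw] using mul_prod_eq_pow_smul ψ h w 1
    simpa using LinearMap.congr_fun h 1
  have hμ : μ ^ L ≠ 0 := fun h0 => one_ne_zero (hψinj (by rw [hψ1, h0, zero_smul, map_zero]))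
  let χ := (μ ^ L)⁻¹ • ψ
  have hχ1 : χ 1 = 1 := by simp [χ, hψ1, smul_smul, inv_mul_cancel₀ hμ]
  have hχmul : ∀ X M, χ (X * M) = χ X * χ M := by
    intro X
    have h : χ ∘ₗ LinearMap.mulLeft K X = LinearMap.mulLeft K (χ X) ∘ₗ χ := by
      refine LinearMap.ext_on hA ?_
      rintro _ ⟨w, hw, rfl⟩
      have := mul_prod_eq_pow_smul ψ h w X
      simp only [show w.length = L from hw] at this
      simp only [LinearMap.comp_apply, LinearMap.mulLeft_apply, LinearMap.smul_apply, χ, hψ w hw,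
        smul_mul_assoc, mul_smul_comm, this, smul_smul, inv_mul_cancel₀ hμ, mul_one]
    exact LinearMap.congr_fun h
  have hχinj : Function.Injective χ := (smul_right_injective _ (inv_ne_zero hμ)).comp hψinj
  obtain ⟨Z, W, hZW, hWZ, hχ⟩ := exists_conj_of_algHom (AlgHom.ofLinearMap χ hχ1 hχmul) hχinj
  refine ⟨Z, W, hZW, hWZ, fun i => ?_⟩
  calc B i = (μ ^ L)⁻¹ • (ψ 1 * B i) := by
        rw [hψ1, smul_mul_assoc, one_mul, smul_smul, inv_mul_cancel₀ hμ, one_smul]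
    _ = μ • χ (A i) := by rw [h, one_mul, smul_comm]; rfl
    _ = μ • (W * A i * Z) := by rw [← hχ (A i)]; rfl

theorem pow_eq_one_of_trace_eq {A B : ι → Matrix n n K} {N : ℕ} [Nonempty n]
    (hA : span K (wordProds A N) = ⊤) {Z W : Matrix n n K} {μ : K} (hZW : Z * W = 1)
    (hWZ : W * Z = 1) (hBA : ∀ i, B i = μ • (W * A i * Z))
    (hstate : ∀ w : List ι, w.length = N → ((w.map A).prod).trace = ((w.map B).prod).trace) :
    μ ^ N = 1 := by
  by_contra hμ
  refine one_ne_zero (span_eq_top_iff_trace_mul_eq_zero.mp hA 1 ?_)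
  rintro _ ⟨w, hw, rfl⟩
  have h := hstate w hw
  rw [prod_eq_pow_smul_conj hZW hWZ hBA, trace_smul, trace_mul_cycle, hZW, one_mul, hw,
    smul_eq_mul, eq_comm, ← sub_eq_zero, ← sub_one_mul] at h
  simpa using (mul_eq_zero.mp h).resolve_left (sub_ne_zero.mpr hμ)

theorem exists_ne_zero_eq_smul_of_conj_eq {Z W Z' W' : Matrix n n K} (hZW : Z * W = 1)
    (hWZ : W * Z = 1) (hZW' : Z' * W' = 1) (h : ∀ M, W * M * Z = W' * M * Z') :
    ∃ c : K, c ≠ 0 ∧ Z' = c • Z := by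
  obtain ⟨c, hc⟩ := exists_eq_smul_one_of_forall_commute (M := Z' * W) fun M =>
    calc M * (Z' * W) = Z' * (W' * M * Z') * W := by simp only [← mul_assoc, hZW', one_mul]
      _ = Z' * (W * M * Z) * W := by rw [h]
      _ = Z' * W * M := by simp only [mul_assoc, hZW, mul_one]
  have hZ' : Z' = c • Z := by rw [← smul_one_mul, ← hc, mul_assoc, hWZ, mul_one]
  rcases eq_or_ne c 0 with rfl | hc0
  · -- only possible when `n` is empty
    have h01 : (0 : Matrix n n K) = 1 := by rw [← hZW', hZ', zero_smul, zero_mul]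
    exact ⟨1, one_ne_zero, eq_of_zero_eq_one h01 _ _⟩
  · exact ⟨c, hc0, hZ'⟩

theorem exists_ne_zero_eq_smul_of_prod_eq {A B : ι → Matrix n n K} {N : ℕ}
    (hA : span K (wordProds A N) = ⊤) {Z W Z' W' : Matrix n n K} {μ μ' : K}
    (hZW : Z * W = 1) (hWZ : W * Z = 1) (hZW' : Z' * W' = 1) (hWZ' : W' * Z' = 1)
    (hμ : μ ^ N = 1) (hμ' : μ' ^ N = 1)
    (hBA : ∀ i, B i = μ • (W * A i * Z)) (hBA' : ∀ i, B i = μ' • (W' * A i * Z')) :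
    ∃ c : K, c ≠ 0 ∧ Z' = c • Z := by
  refine exists_ne_zero_eq_smul_of_conj_eq hZW hWZ hZW' fun M => ?_
  have h : LinearMap.mulRight K Z ∘ₗ LinearMap.mulLeft K W =
      LinearMap.mulRight K Z' ∘ₗ LinearMap.mulLeft K W' := by
    refine LinearMap.ext_on hA ?_
    rintro _ ⟨w, hw, rfl⟩
    have h := (prod_eq_pow_smul_conj hZW hWZ hBA w).symm.trans
      (prod_eq_pow_smul_conj hZW' hWZ' hBA' w)
    simpa [show w.length = N from hw, hμ, hμ'] using h
  exact LinearMap.congr_fun h M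

theorem exists_conj_of_trace_eq {A B : ι → Matrix n n K} {L N : ℕ} (hN : 2 * L + 1 ≤ N)
    (hA : ∀ m, L ≤ m → span K (wordProds A m) = ⊤)
    (hB : ∀ m, L ≤ m → span K (wordProds B m) = ⊤)
    (hstate : ∀ w : List ι, w.length = N → ((w.map A).prod).trace = ((w.map B).prod).trace) :
    ∃ (Z W : Matrix n n K) (μ : K),
      Z * W = 1 ∧ W * Z = 1 ∧ μ ^ N = 1 ∧ ∀ i, B i = μ • (W * A i * Z) := by
  cases isEmpty_or_nonempty n
  · exact ⟨1, 1, 1, mul_one 1, mul_one 1, one_pow N, fun _ => Subsingleton.elim _ _⟩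
  obtain ⟨ψ, hψ⟩ := exists_linearEquiv_of_trace_eq (m := L) (k := N - L)
    (hA _ le_rfl) (hB _ le_rfl) (hA _ (by omega)) (hB _ (by omega))
    fun w hw => hstate w (by omega)
  obtain ⟨φ, hφ⟩ := exists_linearEquiv_of_trace_eq (m := L + 1) (k := N - (L + 1))
    (hA _ (by omega)) (hB _ (by omega)) (hA _ (by omega)) (hB _ (by omega))
    fun w hw => hstate w (by omega)
  have hleft := apply_mul_eq_mul_apply (hA L le_rfl) ψ.toLinearMap φ.toLinearMap hψ hφ
  have hright := apply_mul_eq_apply_mul (hA L le_rfl) ψ.toLinearMap φ.toLinearMap hψ hφ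
  obtain ⟨μ, hμ⟩ :=
    exists_eq_smul_of_exchange (hA L le_rfl) ψ φ.toLinearMap φ.injective hleft hright
  obtain ⟨Z, W, hZW, hWZ, hBA⟩ := exists_conj_of_exchange (hA L le_rfl) (hB L le_rfl)
    ψ.toLinearMap ψ.injective hψ fun i X => (hright i X).symm.trans (hμ _)
  exact ⟨Z, W, μ, hZW, hWZ, pow_eq_one_of_trace_eq (hA N (by omega)) hZW hWZ hBA hstate, hBA⟩

end MatrixProductState

open MatrixProductState

/-- improved system-size bound for the fundamental theorem of
translationally invariant normal MPS: `n ≥ 2L + 1` sites suffice. -/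
theorem fundamental_theorem_TI_normal_MPS_improved (n L d D D' : ℕ)
    (hL : 1 ≤ L) (hn : 2 * L + 1 ≤ n)
    (A : Fin d → Matrix (Fin D) (Fin D) ℂ) (B : Fin d → Matrix (Fin D') (Fin D') ℂ)
    (hA : Function.Injective fun X : Matrix (Fin D) (Fin D) ℂ =>
      fun i : Fin L → Fin d => (((List.ofFn fun k => A (i k)).prod) * Xᵀ).trace)
    (hB : Function.Injective fun X : Matrix (Fin D') (Fin D') ℂ =>
      fun i : Fin L → Fin d => (((List.ofFn fun k => B (i k)).prod) * Xᵀ).trace)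
    (hstate : ∀ i : Fin n → Fin d,
      ((List.ofFn fun k => A (i k)).prod).trace = ((List.ofFn fun k => B (i k)).prod).trace) :
    D = D' ∧
    ∃ (Z : Matrix (Fin D) (Fin D') ℂ) (W : Matrix (Fin D') (Fin D) ℂ) (lam : ℂ),
      Z * W = 1 ∧ W * Z = 1 ∧ lam ^ n = 1 ∧
      (∀ i, B i = lam • (W * A i * Z)) ∧
      ∀ (Z' : Matrix (Fin D) (Fin D') ℂ) (W' : Matrix (Fin D') (Fin D) ℂ) (lam' : ℂ),
        Z' * W' = 1 → W' * Z' = 1 → lam' ^ n = 1 →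
        (∀ i, B i = lam' • (W' * A i * Z')) →
        ∃ c : ℂ, c ≠ 0 ∧ Z' = c • Z := by
  have hA' : ∀ m, L ≤ m → span ℂ (wordProds A m) = ⊤ := fun m =>
    span_wordProds_eq_top_of_le (by omega) (span_wordProds_eq_top_of_injective hA)
  have hB' : ∀ m, L ≤ m → span ℂ (wordProds B m) = ⊤ := fun m =>
    span_wordProds_eq_top_of_le (by omega) (span_wordProds_eq_top_of_injective hB)
  have hstate' : ∀ w : List (Fin d), w.length = n →
      ((w.map A).prod).trace = ((w.map B).prod).trace := by
    rintro w rfl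
    simpa [List.map_ofFn, Function.comp_def] using hstate w.get
  obtain ⟨ψ, -⟩ := exists_linearEquiv_of_trace_eq (hA' L le_rfl) (hB' L le_rfl)
    (hA' (n - L) (by omega)) (hB' (n - L) (by omega)) fun w hw => hstate' w (by omega)
  obtain rfl : D = D' := by
    simpa [Module.finrank_matrix, Nat.mul_self_inj] using ψ.finrank_eq
  obtain ⟨Z, W, μ, hZW, hWZ, hμ, hBA⟩ := exists_conj_of_trace_eq hn hA' hB' hstate'
  exact ⟨rfl, Z, W, μ, hZW, hWZ, hμ, hBA, fun Z' W' μ' hZW' hWZ' hμ' hBA' =>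
    exists_ne_zero_eq_smul_of_prod_eq (hA' n (by omega)) hZW hWZ hZW' hWZ' hμ hμ' hBA hBA'⟩
end
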